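/- Let m ≥ 1, let M, N ⊆ [m] with ∅ ≠ M ⊊ [m] and N ⊊ [m], and let D = aΔ_M^c + cΔ_N^c ⊆ E^m. Then the binary Gray image Φ(C^L_D) is an F₂-linear code of length (2^{m+1}−2^{|M|+1})(2^m−2^{|N|}), with 2^{2m} codewords (F₂-dimension 2m), and minimum nonzero Hamming weight (2^{m−1}−2^{|M|−1})(2^m−2^{|N|}). Moreover, if |M|+|N| ≥ 3, then Φ(C^L_D) is self-orthogonal. -/

import Mathlib

open Finset

/-- The simplicial complex `Δ_M ⊆ 𝔽₂^m` generated by `M ⊆ [m]`: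
all vectors whose support is contained in `M`. -/
def deltaC {m : ℕ} (M : Finset (Fin m)) : Finset (Fin m → ZMod 2) :=
  Finset.univ.filter (fun w => ∀ i, w i ≠ 0 → i ∈ M)

/-- Dot product over `𝔽₂`. -/
def dotp {m : ℕ} (x y : Fin m → ZMod 2) : ZMod 2 := ∑ i, x i * y i

/-- The Gray map on a single element `a·s + c·t ↔ (s, t)` of `E = 𝔽₂ × 𝔽₂`:
`Φ(as + ct) = (t, s + t)`. -/
def grayPair (e : ZMod 2 × ZMod 2) : Fin 2 → ZMod 2 := ![e.2, e.1 + e.2]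

/-- The left codeword `c^L_D(v)` for `v = aα + cβ ↔ (α, β)`:
its coordinate at `d = (t₁, t₂) ∈ D` is `a(α·t₁) + c(β·t₁) ↔ (α·t₁, β·t₁)`. -/
def cwL {m : ℕ} (Ds : Finset ((Fin m → ZMod 2) × (Fin m → ZMod 2)))
    (v : (Fin m → ZMod 2) × (Fin m → ZMod 2)) :
    {d // d ∈ Ds} → ZMod 2 × ZMod 2 :=
  fun d => (dotp v.1 d.1.1, dotp v.2 d.1.1)

/-- The Gray image `Φ(c^L_D(v)) ∈ 𝔽₂^{2|D|}` of the left codeword `c^L_D(v)`;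
its Hamming weight (`hammingNorm`) is the Lee weight of `c^L_D(v)`. -/
def gcwL {m : ℕ} (Ds : Finset ((Fin m → ZMod 2) × (Fin m → ZMod 2)))
    (v : (Fin m → ZMod 2) × (Fin m → ZMod 2)) :
    {d // d ∈ Ds} × Fin 2 → ZMod 2 :=
  fun x => grayPair (cwL Ds v x.1) x.2

/-- The right codeword `c^R_D(v)` for `v = aα + cβ ↔ (α, β)`:
its coordinate at `d = (t₁, t₂) ∈ D` is `a(t₁·α) + c(t₂·α) ↔ (t₁·α, t₂·α)`. -/
def cwR {m : ℕ} (Ds : Finset ((Fin m → ZMod 2) × (Fin m → ZMod 2)))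
    (v : (Fin m → ZMod 2) × (Fin m → ZMod 2)) :
    {d // d ∈ Ds} → ZMod 2 × ZMod 2 :=
  fun d => (dotp d.1.1 v.1, dotp d.1.2 v.1)

/-- The Gray image `Φ(c^R_D(v)) ∈ 𝔽₂^{2|D|}` of the right codeword `c^R_D(v)`;
its Hamming weight (`hammingNorm`) is the Lee weight of `c^R_D(v)`. -/
def gcwR {m : ℕ} (Ds : Finset ((Fin m → ZMod 2) × (Fin m → ZMod 2)))
    (v : (Fin m → ZMod 2) × (Fin m → ZMod 2)) :
    {d // d ∈ Ds} × Fin 2 → ZMod 2 :=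
  fun x => grayPair (cwR Ds v x.1) x.2


/-!
Writing `v = aα + cβ`, the Gray image of the coordinate of `c^L_D(v)` at `(t₁, t₂)` is
`(β·t₁, (α+β)·t₁)`, so the weight of `Φ(c^L_D(v))` is `|Δ_N^c|` times the number of `t ∈ Δ_M^c`
with `β·t ≠ 0` plus the number with `(α+β)·t ≠ 0`. For `γ ≠ 0`, translation by `e_i` with `γ_i ≠ 0`
swaps the zeros and non-zeros of `t ↦ γ·t`, so `γ·t ≠ 0` on exactly half of `𝔽₂^m`, on half of
`Δ_M` if `i ∈ M`, and nowhere on `Δ_M` if `supp γ ∩ M = ∅`. This gives the minimum weight,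
attained at `α = β = e_i` with `i ∈ M`. The code map is injective because `Δ_M^c` spans `𝔽₂^m`
when `M ≠ [m]`. For self-orthogonality, the inner product is a sum over `Δ_M^c × Δ_N^c` of a
quadratic form in `t₁`; each monomial `t₁ᵢ t₁ⱼ` summed over `Δ_M^c` (if `|M| ≥ 3`), or each
constant summed over `Δ_N^c` (otherwise `N ≠ ∅`), vanishes in characteristic 2 because the
summation set is invariant under flipping a coordinate `k ∈ M ∖ {i, j}`, resp. `k ∈ N`.
-/

open Matrix

lemma dotp_eq_dotProduct {m : ℕ} (x y : Fin m → ZMod 2) : dotp x y = x ⬝ᵥ y := rfl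

lemma card_filter_compl {α : Type*} [Fintype α] [DecidableEq α] (S : Finset α) (p : α → Prop)
    [DecidablePred p] : #{x ∈ Sᶜ | p x} = #{x | p x} - #{x ∈ S | p x} := by
  have : ({x ∈ Sᶜ | p x} : Finset α) = ({x | p x} : Finset α) \ {x ∈ S | p x} := by
    ext; simp; tauto
  rw [this, card_sdiff_of_subset (filter_subset_filter _ (subset_univ _))]

section Translation

variable {ι : Type*}

lemma two_mul_card_filter_dotProduct_ne_zero [Fintype ι] {S : Finset (ι → ZMod 2)}
    {γ u : ι → ZMod 2} (hu : γ ⬝ᵥ u ≠ 0) (hS : ∀ t ∈ S, t + u ∈ S) :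
    2 * #{t ∈ S | γ ⬝ᵥ t ≠ 0} = #S := by
  have hne : ∀ x : ZMod 2, x ≠ 0 ↔ x = 1 := by decide
  have hswap : ∀ t, γ ⬝ᵥ (t + u) = 0 ↔ γ ⬝ᵥ t ≠ 0 := by
    intro t
    rw [dotProduct_add, (hne _).1 hu, hne]
    generalize γ ⬝ᵥ t = x
    revert x
    decide
  have hinv : ∀ t : ι → ZMod 2, t + u + u = t := fun t => by
    rw [add_assoc, ZModModule.add_self, add_zero]
  have hhalf : #{t ∈ S | γ ⬝ᵥ t ≠ 0} = #{t ∈ S | ¬ γ ⬝ᵥ t ≠ 0} := by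
    refine card_nbij' (· + u) (· + u) ?_ ?_ (fun t _ => hinv t) (fun t _ => hinv t)
    · intro t ht
      simp only [coe_filter, Set.mem_ofPred_eq, not_not] at ht ⊢
      exact ⟨hS t ht.1, (hswap t).2 ht.2⟩
    · intro t ht
      simp only [coe_filter, Set.mem_ofPred_eq, not_not] at ht ⊢
      exact ⟨hS t ht.1, by rw [← hswap, hinv]; exact ht.2⟩
  have := card_filter_add_card_filter_not (s := S) (fun t => γ ⬝ᵥ t ≠ 0)
  omega

lemma sum_eq_zero_of_add_invariant {S : Finset (ι → ZMod 2)} {u : ι → ZMod 2} (hu : u ≠ 0)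
    (hS : ∀ t ∈ S, t + u ∈ S) {f : (ι → ZMod 2) → ZMod 2} (hf : ∀ t, f (t + u) = f t) :
    ∑ t ∈ S, f t = 0 := by
  refine sum_involution (fun t _ => t + u) (fun t _ => ?_) (fun t _ _ h => ?_) hS
    (fun t _ => by rw [add_assoc, ZModModule.add_self, add_zero])
  · rw [hf, ZModModule.add_self]
  · exact hu (by simpa using h)

end Translation

section Delta

variable {m : ℕ}

lemma mem_deltaC {M : Finset (Fin m)} {w : Fin m → ZMod 2} :
    w ∈ deltaC M ↔ ∀ i ∉ M, w i = 0 := by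
  simp only [deltaC, mem_filter, mem_univ, true_and]
  exact forall_congr' fun i => not_imp_comm

lemma deltaC_univ : deltaC (univ : Finset (Fin m)) = univ := by
  ext; simp [mem_deltaC]

lemma add_mem_deltaC_iff {M : Finset (Fin m)} {t u : Fin m → ZMod 2} (hu : u ∈ deltaC M) :
    t + u ∈ deltaC M ↔ t ∈ deltaC M := by
  rw [mem_deltaC] at hu
  simp only [mem_deltaC]
  exact forall₂_congr fun i hi => by rw [Pi.add_apply, hu i hi, add_zero]

lemma single_mem_deltaC {M : Finset (Fin m)} {k : Fin m} (hk : k ∈ M) :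
    Pi.single k 1 ∈ deltaC M := by
  rw [mem_deltaC]
  intro i hi
  rw [Pi.single_apply, if_neg (ne_of_mem_of_not_mem hk hi).symm]

lemma add_single_mem_compl_deltaC {M : Finset (Fin m)} {k : Fin m} (hk : k ∈ M) :
    ∀ t ∈ (deltaC M)ᶜ, t + Pi.single k 1 ∈ (deltaC M)ᶜ := fun t ht => by
  rw [mem_compl, add_mem_deltaC_iff (single_mem_deltaC hk)]
  exact mem_compl.1 ht

lemma card_deltaC (M : Finset (Fin m)) : #(deltaC M) = 2 ^ #M := by
  have : deltaC M = Fintype.piFinset fun i => if i ∈ M then univ else {0} := by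
    ext w
    simp only [mem_deltaC, Fintype.mem_piFinset]
    refine forall_congr' fun i => ?_
    split_ifs with hi <;> simp [hi]
  rw [this, Fintype.card_piFinset]
  simp [apply_ite, prod_ite_mem]

lemma card_compl_deltaC (M : Finset (Fin m)) : #(deltaC M)ᶜ = 2 ^ m - 2 ^ #M := by
  simp [card_compl, card_deltaC]

lemma card_filter_deltaC_of_mem {M : Finset (Fin m)} {γ : Fin m → ZMod 2} {i : Fin m}
    (hi : i ∈ M) (hγi : γ i ≠ 0) :
    #{t ∈ deltaC M | γ ⬝ᵥ t ≠ 0} = 2 ^ (#M - 1) := by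
  have h := two_mul_card_filter_dotProduct_ne_zero (u := Pi.single i 1)
    (by rwa [dotProduct_single, mul_one]) fun t => (add_mem_deltaC_iff (single_mem_deltaC hi)).2
  have hM : 1 ≤ #M := card_pos.2 ⟨i, hi⟩
  rw [card_deltaC, ← Nat.two_pow_pred_mul_two hM] at h
  omega

lemma card_filter_deltaC_of_forall_eq_zero {M : Finset (Fin m)} {γ : Fin m → ZMod 2}
    (hγ : ∀ i ∈ M, γ i = 0) : #{t ∈ deltaC M | γ ⬝ᵥ t ≠ 0} = 0 := by
  refine card_eq_zero.2 (filter_eq_empty_iff.2 fun t ht => not_not.2 ?_)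
  rw [mem_deltaC] at ht
  refine sum_eq_zero fun i _ => ?_
  by_cases hi : i ∈ M
  · rw [hγ i hi, zero_mul]
  · rw [ht i hi, mul_zero]

lemma card_filter_deltaC_le (M : Finset (Fin m)) (γ : Fin m → ZMod 2) :
    #{t ∈ deltaC M | γ ⬝ᵥ t ≠ 0} ≤ 2 ^ (#M - 1) := by
  by_cases h : ∃ i ∈ M, γ i ≠ 0
  · obtain ⟨i, hi, hγi⟩ := h
    exact (card_filter_deltaC_of_mem hi hγi).le
  · push Not at h
    rw [card_filter_deltaC_of_forall_eq_zero h]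
    exact Nat.zero_le _

lemma card_filter_dotProduct_ne_zero {γ : Fin m → ZMod 2} (hγ : γ ≠ 0) :
    #{t | γ ⬝ᵥ t ≠ 0} = 2 ^ (m - 1) := by
  obtain ⟨i, hγi⟩ := Function.ne_iff.1 hγ
  simpa [deltaC_univ] using card_filter_deltaC_of_mem (mem_univ i) hγi

lemma card_filter_compl_deltaC_of_mem {M : Finset (Fin m)} {γ : Fin m → ZMod 2} {i : Fin m}
    (hi : i ∈ M) (hγi : γ i ≠ 0) :
    #{t ∈ (deltaC M)ᶜ | γ ⬝ᵥ t ≠ 0} = 2 ^ (m - 1) - 2 ^ (#M - 1) := by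
  rw [card_filter_compl, card_filter_dotProduct_ne_zero (Function.ne_iff.2 ⟨i, hγi⟩),
    card_filter_deltaC_of_mem hi hγi]

lemma le_card_filter_compl_deltaC (M : Finset (Fin m)) {γ : Fin m → ZMod 2} (hγ : γ ≠ 0) :
    2 ^ (m - 1) - 2 ^ (#M - 1) ≤ #{t ∈ (deltaC M)ᶜ | γ ⬝ᵥ t ≠ 0} := by
  rw [card_filter_compl, card_filter_dotProduct_ne_zero hγ]
  exact Nat.sub_le_sub_left (card_filter_deltaC_le M γ) _

lemma eq_zero_of_forall_compl_deltaC {M : Finset (Fin m)} (hM : M ≠ univ) {γ : Fin m → ZMod 2}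
    (h : ∀ t ∈ (deltaC M)ᶜ, γ ⬝ᵥ t = 0) : γ = 0 := by
  obtain ⟨i₀, hi₀⟩ : ∃ i, i ∉ M := by simpa [eq_univ_iff_forall] using hM
  have hflip : ∀ t, t ∈ deltaC M → t + Pi.single i₀ 1 ∈ (deltaC M)ᶜ := by
    intro t ht
    rw [mem_deltaC] at ht
    simp only [mem_compl, mem_deltaC, not_forall]
    exact ⟨i₀, hi₀, by simp [ht i₀ hi₀]⟩
  -- `t ∈ Δ_M` is the sum of `t + e_{i₀}` and `e_{i₀}`, both outside `Δ_M`
  have hall : ∀ t, γ ⬝ᵥ t = 0 := by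
    intro t
    by_cases ht : t ∈ deltaC M
    · have hsingle := hflip 0 (by simp [mem_deltaC])
      rw [zero_add] at hsingle
      simpa [dotProduct_add, h _ hsingle] using h _ (hflip t ht)
    · exact h t (mem_compl.2 ht)
  funext i
  simpa using hall (Pi.single i 1)

lemma sum_compl_deltaC_mul_apply {M : Finset (Fin m)} (hM : 3 ≤ #M) (i j : Fin m) :
    ∑ t ∈ (deltaC M)ᶜ, t i * t j = 0 := by
  obtain ⟨k, hk⟩ : (M \ {i, j}).Nonempty := by
    have := le_card_sdiff {i, j} M
    have := card_le_two (a := i) (b := j)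
    exact card_pos.1 (by omega)
  simp only [mem_sdiff, mem_insert, mem_singleton, not_or] at hk
  obtain ⟨hkM, hki, hkj⟩ := hk
  refine sum_eq_zero_of_add_invariant (u := Pi.single k 1) (by simp)
    (add_single_mem_compl_deltaC hkM) fun t => ?_
  simp [Ne.symm hki, Ne.symm hkj]

lemma sum_compl_deltaC_dotProduct_mul {M : Finset (Fin m)} (hM : 3 ≤ #M)
    (γ δ : Fin m → ZMod 2) : ∑ t ∈ (deltaC M)ᶜ, (γ ⬝ᵥ t) * (δ ⬝ᵥ t) = 0 := by
  calc ∑ t ∈ (deltaC M)ᶜ, (γ ⬝ᵥ t) * (δ ⬝ᵥ t)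
      = ∑ t ∈ (deltaC M)ᶜ, ∑ i, ∑ j, γ i * δ j * (t i * t j) := by
        refine sum_congr rfl fun t _ => ?_
        simp only [dotProduct, sum_mul_sum]
        exact sum_congr rfl fun i _ => sum_congr rfl fun j _ => by ring
    _ = ∑ i, ∑ j, γ i * δ j * ∑ t ∈ (deltaC M)ᶜ, t i * t j := by
        rw [sum_comm]
        simp_rw [mul_sum]
        exact sum_congr rfl fun i _ => sum_comm
    _ = 0 := by simp [sum_compl_deltaC_mul_apply hM]

end Delta

section Gray

variable {m : ℕ} (Ds : Finset ((Fin m → ZMod 2) × (Fin m → ZMod 2)))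

lemma grayPair_eq_zero_iff {e : ZMod 2 × ZMod 2} : grayPair e = 0 ↔ e = 0 := by
  obtain ⟨s, t⟩ := e
  revert s t
  decide

def gcwLHom : (Fin m → ZMod 2) × (Fin m → ZMod 2) →+ ({d // d ∈ Ds} × Fin 2 → ZMod 2) where
  toFun := gcwL Ds
  map_zero' := by
    funext x
    simp [gcwL, cwL, dotp_eq_dotProduct, grayPair_eq_zero_iff.2]
  map_add' v w := by
    funext ⟨d, j⟩
    fin_cases j <;> simp [gcwL, cwL, grayPair, dotp_eq_dotProduct, add_dotProduct, add_add_add_comm]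

lemma gcwL_eq_zero_iff {v : (Fin m → ZMod 2) × (Fin m → ZMod 2)} :
    gcwL Ds v = 0 ↔ ∀ d ∈ Ds, v.1 ⬝ᵥ d.1 = 0 ∧ v.2 ⬝ᵥ d.1 = 0 := by
  simp only [funext_iff, gcwL, Fin.forall_fin_two, grayPair, cwL, dotp_eq_dotProduct, Prod.forall,
    Subtype.forall, Matrix.cons_val_zero, Matrix.cons_val_one, Pi.zero_apply]
  refine forall₃_congr fun _ _ _ => ⟨fun ⟨h2, h12⟩ => ⟨?_, h2⟩, fun ⟨h1, h2⟩ => ⟨h2, ?_⟩⟩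
  · simpa [h2] using h12
  · simp [h1, h2]

lemma sum_subtype_prod_fin_two {R : Type*} [AddCommMonoid R]
    (f : (Fin m → ZMod 2) × (Fin m → ZMod 2) → Fin 2 → R) :
    ∑ x : {d // d ∈ Ds} × Fin 2, f x.1.1 x.2 = ∑ d ∈ Ds, (f d 0 + f d 1) := by
  rw [Fintype.sum_prod_type, ← sum_coe_sort Ds]
  simp [Fin.sum_univ_two]

lemma hammingNorm_gcwL (α β : Fin m → ZMod 2) :
    hammingNorm (gcwL Ds (α, β))
      = #{d ∈ Ds | β ⬝ᵥ d.1 ≠ 0} + #{d ∈ Ds | (α + β) ⬝ᵥ d.1 ≠ 0} := by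
  rw [hammingNorm, card_filter, card_filter, card_filter, ← sum_add_distrib]
  refine (sum_subtype_prod_fin_two Ds
    fun d j => if grayPair (α ⬝ᵥ d.1, β ⬝ᵥ d.1) j ≠ 0 then 1 else 0).trans ?_
  refine sum_congr rfl fun d _ => ?_
  simp only [grayPair, add_dotProduct, Matrix.cons_val_zero, Matrix.cons_val_one]
  congr 1

lemma sum_gcwL_mul_gcwL (v w : (Fin m → ZMod 2) × (Fin m → ZMod 2)) :
    ∑ x, gcwL Ds v x * gcwL Ds w x
      = ∑ d ∈ Ds, ((v.2 ⬝ᵥ d.1) * (w.2 ⬝ᵥ d.1) + ((v.1 + v.2) ⬝ᵥ d.1) * ((w.1 + w.2) ⬝ᵥ d.1)) := by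
  refine (sum_subtype_prod_fin_two Ds
    fun d j => grayPair (v.1 ⬝ᵥ d.1, v.2 ⬝ᵥ d.1) j * grayPair (w.1 ⬝ᵥ d.1, w.2 ⬝ᵥ d.1) j).trans ?_
  simp [grayPair, add_dotProduct]

end Gray

section ProductCode

variable {m : ℕ} {A B : Finset (Fin m → ZMod 2)}

lemma gcwL_prod_injective (hA : ∀ γ : Fin m → ZMod 2, (∀ t ∈ A, γ ⬝ᵥ t = 0) → γ = 0)
    (hB : B.Nonempty) : Function.Injective (gcwL (A ×ˢ B)) := by
  refine (injective_iff_map_eq_zero (gcwLHom (A ×ˢ B))).2 fun v hv => ?_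
  obtain ⟨s, hs⟩ := hB
  have h : ∀ t ∈ A, v.1 ⬝ᵥ t = 0 ∧ v.2 ⬝ᵥ t = 0 := fun t ht =>
    (gcwL_eq_zero_iff _).1 hv (t, s) (mem_product.2 ⟨ht, hs⟩)
  exact Prod.ext (hA _ fun t ht => (h t ht).1) (hA _ fun t ht => (h t ht).2)

lemma hammingNorm_gcwL_prod (α β : Fin m → ZMod 2) :
    hammingNorm (gcwL (A ×ˢ B) (α, β))
      = #B * (#{t ∈ A | β ⬝ᵥ t ≠ 0} + #{t ∈ A | (α + β) ⬝ᵥ t ≠ 0}) := by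
  rw [hammingNorm_gcwL, filter_product_left (fun t => β ⬝ᵥ t ≠ 0),
    filter_product_left (fun t => (α + β) ⬝ᵥ t ≠ 0), card_product, card_product]
  ring

end ProductCode

section DeltaCode

variable {m : ℕ} {M N : Finset (Fin m)}

lemma gcwL_deltaC_injective (hM : M ≠ univ) (hN : N ≠ univ) :
    Function.Injective (gcwL ((deltaC M)ᶜ ×ˢ (deltaC N)ᶜ)) := by
  refine gcwL_prod_injective (fun _ => eq_zero_of_forall_compl_deltaC hM) (card_pos.1 ?_)
  rw [card_compl_deltaC]
  have := (card_lt_iff_ne_univ N).2 hN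
  simp only [Fintype.card_fin] at this
  exact Nat.sub_pos_of_lt (Nat.pow_lt_pow_right one_lt_two this)

lemma le_hammingNorm_gcwL_deltaC (M N : Finset (Fin m)) {v : (Fin m → ZMod 2) × (Fin m → ZMod 2)}
    (hv : v ≠ 0) :
    (2 ^ (m - 1) - 2 ^ (#M - 1)) * (2 ^ m - 2 ^ #N)
      ≤ hammingNorm (gcwL ((deltaC M)ᶜ ×ˢ (deltaC N)ᶜ) v) := by
  obtain ⟨α, β⟩ := v
  rw [hammingNorm_gcwL_prod, card_compl_deltaC, mul_comm]
  refine Nat.mul_le_mul_left _ ?_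
  by_cases hβ : β = 0
  · have hα : α + β ≠ 0 := fun h => hv (by simp_all)
    exact (le_card_filter_compl_deltaC M hα).trans (Nat.le_add_left _ _)
  · exact (le_card_filter_compl_deltaC M hβ).trans (Nat.le_add_right _ _)

lemma hammingNorm_gcwL_deltaC_single (N : Finset (Fin m)) {i : Fin m} (hi : i ∈ M) :
    hammingNorm (gcwL ((deltaC M)ᶜ ×ˢ (deltaC N)ᶜ) (Pi.single i 1, Pi.single i 1))
      = (2 ^ (m - 1) - 2 ^ (#M - 1)) * (2 ^ m - 2 ^ #N) := by
  rw [hammingNorm_gcwL_prod, card_compl_deltaC, card_filter_compl_deltaC_of_mem hi (by simp),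
    ZModModule.add_self]
  simp [mul_comm]

lemma sum_gcwL_mul_gcwL_deltaC (h : 3 ≤ #M + #N) (v w : (Fin m → ZMod 2) × (Fin m → ZMod 2)) :
    ∑ x, gcwL ((deltaC M)ᶜ ×ˢ (deltaC N)ᶜ) v x * gcwL ((deltaC M)ᶜ ×ˢ (deltaC N)ᶜ) w x = 0 := by
  rw [sum_gcwL_mul_gcwL, sum_product]
  by_cases hM : 3 ≤ #M
  · rw [sum_comm]
    refine sum_eq_zero fun _ _ => ?_
    rw [sum_add_distrib, sum_compl_deltaC_dotProduct_mul hM, sum_compl_deltaC_dotProduct_mul hM,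
      add_zero]
  · obtain ⟨k, hk⟩ : N.Nonempty := card_pos.1 (by omega)
    exact sum_eq_zero fun _ _ => sum_eq_zero_of_add_invariant (u := Pi.single k 1) (by simp)
      (add_single_mem_compl_deltaC hk) fun _ => rfl

end DeltaCode

theorem stmt_8_general {m : ℕ} (M N : Finset (Fin m))
    (hM : M ≠ ∅) (hMu : M ≠ Finset.univ) (hNu : N ≠ Finset.univ)
    (Ds : Finset ((Fin m → ZMod 2) × (Fin m → ZMod 2)))
    (hDs : Ds = (deltaC M)ᶜ ×ˢ (deltaC N)ᶜ) :
    (2 * Ds.card = (2 ^ (m + 1) - 2 ^ (M.card + 1)) * (2 ^ m - 2 ^ N.card)) ∧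
    ((Finset.univ : Finset ((Fin m → ZMod 2) × (Fin m → ZMod 2))).image (gcwL Ds)).card = 2 ^ (2 * m) ∧
    (∀ v w : (Fin m → ZMod 2) × (Fin m → ZMod 2), ∃ z : (Fin m → ZMod 2) × (Fin m → ZMod 2), gcwL Ds z = gcwL Ds v + gcwL Ds w) ∧
    (∀ v : (Fin m → ZMod 2) × (Fin m → ZMod 2), gcwL Ds v ≠ 0 → (2 ^ (m - 1) - 2 ^ (M.card - 1)) * (2 ^ m - 2 ^ N.card) ≤ hammingNorm (gcwL Ds v)) ∧
    (∃ v : (Fin m → ZMod 2) × (Fin m → ZMod 2), gcwL Ds v ≠ 0 ∧ hammingNorm (gcwL Ds v) = (2 ^ (m - 1) - 2 ^ (M.card - 1)) * (2 ^ m - 2 ^ N.card)) ∧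
    (3 ≤ M.card + N.card →
      ∀ v w : (Fin m → ZMod 2) × (Fin m → ZMod 2), ∑ i, gcwL Ds v i * gcwL Ds w i = 0) := by
  subst hDs
  have hinj := gcwL_deltaC_injective hMu hNu
  have hzero : gcwL ((deltaC M)ᶜ ×ˢ (deltaC N)ᶜ) 0 = 0 := map_zero (gcwLHom _)
  obtain ⟨i, hi⟩ := nonempty_iff_ne_empty.2 hM
  refine ⟨?_, ?_, fun v w => ⟨v + w, map_add (gcwLHom _) v w⟩,
    fun v hv => le_hammingNorm_gcwL_deltaC M N fun h => hv (h ▸ hzero),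
    ⟨_, fun h => ?_, hammingNorm_gcwL_deltaC_single N hi⟩, sum_gcwL_mul_gcwL_deltaC⟩
  · rw [card_product, card_compl_deltaC, card_compl_deltaC, pow_succ, pow_succ, ← Nat.sub_mul]
    ring
  · rw [card_image_of_injective _ hinj]
    simp [two_mul, pow_add]
  · simpa using congrArg (·.1 i) (hinj (h.trans hzero.symm))

theorem stmt_8 {m : ℕ} (hm : 1 ≤ m) (M N : Finset (Fin m))
    (hM : M ≠ ∅) (hMu : M ≠ Finset.univ) (hNu : N ≠ Finset.univ)
    (Ds : Finset ((Fin m → ZMod 2) × (Fin m → ZMod 2)))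
    (hDs : Ds = (deltaC M)ᶜ ×ˢ (deltaC N)ᶜ) :
    (2 * Ds.card = (2 ^ (m + 1) - 2 ^ (M.card + 1)) * (2 ^ m - 2 ^ N.card)) ∧
    ((Finset.univ : Finset ((Fin m → ZMod 2) × (Fin m → ZMod 2))).image (gcwL Ds)).card = 2 ^ (2 * m) ∧
    (∀ v w : (Fin m → ZMod 2) × (Fin m → ZMod 2), ∃ z : (Fin m → ZMod 2) × (Fin m → ZMod 2), gcwL Ds z = gcwL Ds v + gcwL Ds w) ∧
    (∀ v : (Fin m → ZMod 2) × (Fin m → ZMod 2), gcwL Ds v ≠ 0 → (2 ^ (m - 1) - 2 ^ (M.card - 1)) * (2 ^ m - 2 ^ N.card) ≤ hammingNorm (gcwL Ds v)) ∧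
    (∃ v : (Fin m → ZMod 2) × (Fin m → ZMod 2), gcwL Ds v ≠ 0 ∧ hammingNorm (gcwL Ds v) = (2 ^ (m - 1) - 2 ^ (M.card - 1)) * (2 ^ m - 2 ^ N.card)) ∧
    (3 ≤ M.card + N.card →
      ∀ v w : (Fin m → ZMod 2) × (Fin m → ZMod 2), ∑ i, gcwL Ds v i * gcwL Ds w i = 0) :=
  stmt_8_general M N hM hMu hNu Ds hDs
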